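/- arXiv:2601.00049 — 8 statements merged into one kernel-verified Lean document; each statement's English description precedes it below -/
import Mathlib

section
/- Let K be a linear ordered field and F a subfield of K. If α ∈ K is algebraic over F and α > 0, then there exist elements e, d of F with 0 < e, e < α, and α < d. In other words, every positive element of K that is algebraic over F can be sandwiched strictly between two positive elements of F. -/
/-!
A root `x` of `p = ∑ aᵢ Xⁱ` of degree `n` with `|x| ≥ 1` satisfies
`|aₙ| |x| ≤ ∑_{i<n} |aᵢ|`, so `|x| < 1 + (∑_{i<n} |aᵢ|) / |aₙ|`, and this bound lies in any subfield
containing the coefficients. Applied to `α` and to `α⁻¹` (also algebraic over `F`), it gives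
`d, d' ∈ F` with `α < d` and `α⁻¹ < d'`, so `d'⁻¹ < α < d`.
-/

open Polynomial Finset

namespace Polynomial

variable {K : Type*} [Field K] [LinearOrder K]

noncomputable def rootBound (p : K[X]) : K :=
  1 + (∑ i ∈ range p.natDegree, |p.coeff i|) / |p.leadingCoeff|

theorem rootBound_mem {p : K[X]} {F : Subfield K} (hF : ∀ i, p.coeff i ∈ F) : p.rootBound ∈ F :=
  F.add_mem F.one_mem <| F.div_mem (F.sum_mem fun i _ => abs_mem_iff.2 (hF i))
    (abs_mem_iff.2 (hF _))

variable [IsStrictOrderedRing K]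

theorem abs_leadingCoeff_mul_pow_le_of_isRoot {p : K[X]} {x : K} (hx : p.IsRoot x) :
    |p.leadingCoeff| * |x| ^ p.natDegree ≤ ∑ i ∈ range p.natDegree, |p.coeff i| * |x| ^ i := by
  have hsum : p.leadingCoeff * x ^ p.natDegree = -∑ i ∈ range p.natDegree, p.coeff i * x ^ i := by
    have := hx.eq_zero
    rw [eval_eq_sum_range, sum_range_succ] at this
    exact eq_neg_of_add_eq_zero_right this
  calc |p.leadingCoeff| * |x| ^ p.natDegree = |∑ i ∈ range p.natDegree, p.coeff i * x ^ i| := by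
        rw [← abs_pow, ← abs_mul, hsum, abs_neg]
    _ ≤ ∑ i ∈ range p.natDegree, |p.coeff i * x ^ i| := abs_sum_le_sum_abs _ _
    _ = ∑ i ∈ range p.natDegree, |p.coeff i| * |x| ^ i := by simp only [abs_mul, abs_pow]

theorem abs_leadingCoeff_mul_le_of_isRoot {p : K[X]} {x : K} (hx : p.IsRoot x) (hx1 : 1 ≤ |x|) :
    |p.leadingCoeff| * |x| ≤ ∑ i ∈ range p.natDegree, |p.coeff i| := by
  set n := p.natDegree
  have key : |p.leadingCoeff| * |x| * |x| ^ n ≤ (∑ i ∈ range n, |p.coeff i|) * |x| ^ n :=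
    calc |p.leadingCoeff| * |x| * |x| ^ n = |p.leadingCoeff| * |x| ^ n * |x| := by ring
      _ ≤ (∑ i ∈ range n, |p.coeff i| * |x| ^ i) * |x| := by
          gcongr; exact abs_leadingCoeff_mul_pow_le_of_isRoot hx
      _ = ∑ i ∈ range n, |p.coeff i| * |x| ^ (i + 1) := by
          rw [sum_mul]; simp only [pow_succ, mul_assoc]
      _ ≤ ∑ i ∈ range n, |p.coeff i| * |x| ^ n := by
          gcongr with i hi
          exact mem_range.1 hi
      _ = (∑ i ∈ range n, |p.coeff i|) * |x| ^ n := (sum_mul ..).symm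
  exact le_of_mul_le_mul_right key (by positivity)

theorem abs_lt_rootBound {p : K[X]} (hp : p ≠ 0) {x : K} (hx : p.IsRoot x) :
    |x| < p.rootBound := by
  have hlc : 0 < |p.leadingCoeff| := abs_pos.2 (leadingCoeff_ne_zero.2 hp)
  have hS : 0 ≤ (∑ i ∈ range p.natDegree, |p.coeff i|) / |p.leadingCoeff| := by positivity
  rw [rootBound]
  rcases le_or_gt 1 |x| with hx1 | hx1
  · have := (le_div_iff₀' hlc).2 (abs_leadingCoeff_mul_le_of_isRoot hx hx1)
    linarith
  · linarith

end Polynomial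

theorem IsAlgebraic.exists_lt_mem_subfield {K : Type*} [Field K] [LinearOrder K]
    [IsStrictOrderedRing K] {F : Subfield K} {α : K} (halg : IsAlgebraic F α) :
    ∃ d : F, α < d := by
  obtain ⟨p, hp, hroot⟩ := halg
  have hcoeff (i : ℕ) : (p.map (algebraMap F K)).coeff i ∈ F := by
    rw [coeff_map]; exact (p.coeff i).2
  refine ⟨⟨_, rootBound_mem hcoeff⟩, ?_⟩
  exact (le_abs_self α).trans_lt <| abs_lt_rootBound
    ((Polynomial.map_ne_zero_iff (algebraMap F K).injective).2 hp)
    (by rwa [IsRoot, eval_map_algebraMap])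

/-- Every positive element of a linear ordered field `K` that is algebraic over a subfield
`F` can be sandwiched strictly between two positive elements of `F`. -/
theorem exists_mem_subfield_sandwich
    {K : Type*} [Field K] [LinearOrder K] [IsStrictOrderedRing K] (F : Subfield K) (α : K)
    (halg : IsAlgebraic F α) (hpos : 0 < α) :
    ∃ e d : F, 0 < (e : K) ∧ (e : K) < α ∧ α < (d : K) := by
  obtain ⟨d, hd⟩ := halg.exists_lt_mem_subfield
  obtain ⟨d', hd'⟩ := halg.inv.exists_lt_mem_subfield
  have hd'pos : 0 < (d' : K) := (inv_pos.2 hpos).trans hd'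
  refine ⟨d'⁻¹, d, by simpa using hd'pos, ?_, hd⟩
  simpa using (inv_lt_comm₀ hpos hd'pos).1 hd'
end

section
/- Let F and K be linear ordered fields with order positive presentations ν : ℕ → F and μ : ℕ → K respectively, let i : F → K be an order-preserving ring embedding such that every element of K is algebraic over the image i(F), and suppose ν is reducible to μ, i.e., there is a computable function h : ℕ → ℕ with μ(h n) = i(ν n) for all n. If U ⊆ K is effectively open with respect to μ, then the preimage i⁻¹(U) = {x ∈ F | i(x) ∈ U} is effectively open with respect to ν. -/
/-!
Every element of `K` is a root of a nonzero polynomial over `F`, so the Cauchy bound places it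
below some `i M`; applied to `d⁻¹` this gives, for every `d > 0` in `K`, some `e > 0` in `F` with
`i e < d`. Hence if `i x ∈ (c, c')`, then `x` lies in an interval `(y, z)` of `F` with
`c < i y` and `i z < c'`, so `i⁻¹(U)` is the union of those intervals `(ν n, ν k)` for which
`(μ (h n), μ (h k))` sits inside one of the enumerated intervals of `U`. That condition is an
existential projection of a c.e. relation between codes, so the index set is c.e.
-/

/-- A set of natural numbers is computably enumerable if it is the domain of some
partial computable function `ℕ →. ℕ`. -/
def CESet (S : Set ℕ) : Prop :=
  ∃ g : ℕ →. ℕ, Partrec g ∧ ∀ n, (g n).Dom ↔ n ∈ S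

/-- `ν : ℕ → F` is an order positive presentation of the linear ordered field `F`:
`ν` is surjective, addition and multiplication are computable with respect to `ν`,
the strict order is computably enumerable and inversion of nonzero elements is
partially computable. -/
structure OrderPosPres (F : Type*) [Field F] [LinearOrder F] [IsStrictOrderedRing F] (ν : ℕ → F) : Prop where
  surj : Function.Surjective ν
  add : ∃ a : ℕ → ℕ → ℕ, Computable₂ a ∧ ∀ n k, ν (a n k) = ν n + ν k
  mul : ∃ m : ℕ → ℕ → ℕ, Computable₂ m ∧ ∀ n k, ν (m n k) = ν n * ν k
  lt : CESet {p : ℕ | ∃ n k, p = Nat.pair n k ∧ ν n < ν k}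
  inv : ∃ g : ℕ →. ℕ, Partrec g ∧ ∀ n, ν n ≠ 0 → ∃ v ∈ g n, ν v = (ν n)⁻¹

/-- A set `U ⊆ F` is effectively open with respect to a presentation `ν` if it is the
union of an effectively enumerated family of open intervals with `ν`-computable
endpoints. -/
def EffOpen {F : Type*} [Field F] [LinearOrder F] [IsStrictOrderedRing F] (ν : ℕ → F) (U : Set F) : Prop :=
  ∃ W : Set ℕ, CESet W ∧
    (∀ p ∈ W, ν (Nat.unpair p).1 < ν (Nat.unpair p).2) ∧
    U = ⋃ p ∈ W, Set.Ioo (ν (Nat.unpair p).1) (ν (Nat.unpair p).2)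

namespace CESet

open Nat.Partrec.Code in
theorem iff_exists_bool {S : Set ℕ} :
    CESet S ↔ ∃ f : ℕ → ℕ → Bool, Computable₂ f ∧ ∀ n, n ∈ S ↔ ∃ k, f n k = true := by
  constructor
  · rintro ⟨g, hg, hgS⟩
    obtain ⟨c, rfl⟩ := exists_code.1 (Partrec.nat_iff.1 hg)
    refine ⟨fun n k => (evaln k c n).isSome, ?_, fun n => ?_⟩
    · exact (Primrec.option_isSome.comp <| primrec_evaln.comp <|
        (Primrec.snd.pair (Primrec.const c)).pair Primrec.fst).to_comp
    · simp only [← hgS, Part.dom_iff_mem, evaln_complete, Option.isSome_iff_exists]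
      exact ⟨fun ⟨x, k, hk⟩ => ⟨k, x, hk⟩, fun ⟨k, x, hk⟩ => ⟨x, k, hk⟩⟩
  · rintro ⟨f, hf, hfS⟩
    refine ⟨fun n => Nat.rfind fun k => f n k, Partrec.rfind hf.partrec₂, fun n => ?_⟩
    rw [hfS]
    constructor
    · intro hd
      exact ⟨_, by simpa using Nat.rfind_spec (Part.get_mem hd)⟩
    · rintro ⟨k, hk⟩
      obtain ⟨m, hm, -⟩ := Nat.rfind_min' hk
      exact Part.dom_iff_mem.2 ⟨m, hm⟩

theorem preimage {S : Set ℕ} (hS : CESet S) {f : ℕ → ℕ} (hf : Computable f) :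
    CESet (f ⁻¹' S) :=
  let ⟨g, hg, hgS⟩ := hS
  ⟨fun n => g (f n), hg.comp hf, fun n => hgS (f n)⟩

theorem inter {S T : Set ℕ} (hS : CESet S) (hT : CESet T) : CESet (S ∩ T) := by
  obtain ⟨g, hg, hgS⟩ := hS
  obtain ⟨g', hg', hg'T⟩ := hT
  refine ⟨fun n => (g n).bind fun _ => g' n, hg.bind (hg'.comp Computable.fst), fun n => ?_⟩
  simp [Part.bind_dom, ← hgS, ← hg'T]

theorem exists_pair {S : Set ℕ} (hS : CESet S) : CESet {n | ∃ m, Nat.pair n m ∈ S} := by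
  obtain ⟨f, hf, hfS⟩ := iff_exists_bool.1 hS
  refine iff_exists_bool.2 ⟨fun n s => f (Nat.pair n s.unpair.1) s.unpair.2, ?_, fun n => ?_⟩
  · exact hf.comp (Primrec₂.natPair.to_comp.comp Computable.fst
      (Computable.fst.comp (Computable.unpair.comp Computable.snd)))
      (Computable.snd.comp (Computable.unpair.comp Computable.snd))
  · simp only [Set.mem_ofPred_eq, hfS]
    exact ⟨fun ⟨m, k, hk⟩ => ⟨Nat.pair m k, by simpa using hk⟩, fun ⟨s, hs⟩ => ⟨_, _, hs⟩⟩

end CESet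

def ltCodes {F : Type*} [LinearOrder F] (ν : ℕ → F) : Set ℕ :=
  {p | ν p.unpair.1 < ν p.unpair.2}

theorem OrderPosPres.ceSet_ltCodes {F : Type*} [Field F] [LinearOrder F] [IsStrictOrderedRing F]
    {ν : ℕ → F} (hν : OrderPosPres F ν) : CESet (ltCodes ν) := by
  convert hν.lt using 1
  ext p
  exact ⟨fun hp => ⟨_, _, p.pair_unpair.symm, hp⟩,
    by rintro ⟨n, k, rfl, h⟩; simpa [ltCodes] using h⟩

theorem ceSet_subinterval_codes {F K : Type*} [LinearOrder F] [LinearOrder K]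
    {ν : ℕ → F} {μ : ℕ → K} (hν : CESet (ltCodes ν)) (hμ : CESet (ltCodes μ))
    {h : ℕ → ℕ} (hh : Computable h) {W : Set ℕ} (hW : CESet W) :
    CESet {q | ν q.unpair.1 < ν q.unpair.2 ∧
      ∃ p ∈ W, μ p.unpair.1 < μ (h q.unpair.1) ∧ μ (h q.unpair.2) < μ p.unpair.2} := by
  have hfst : Computable fun n : ℕ => n.unpair.1 := Computable.fst.comp Computable.unpair
  have hsnd : Computable fun n : ℕ => n.unpair.2 := Computable.snd.comp Computable.unpair
  have hpair : Computable₂ Nat.pair := Primrec₂.natPair.to_comp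
  -- `s` codes a pair `(q, p)` of an interval code of `F` and an interval code in `W`
  have hcodes : CESet ((fun s => s.unpair.2) ⁻¹' W ∩
      (fun s => Nat.pair s.unpair.2.unpair.1 (h s.unpair.1.unpair.1)) ⁻¹' ltCodes μ ∩
      (fun s => Nat.pair (h s.unpair.1.unpair.2) s.unpair.2.unpair.2) ⁻¹' ltCodes μ) :=
    ((hW.preimage hsnd).inter (hμ.preimage
      (hpair.comp (hfst.comp hsnd) (hh.comp (hfst.comp hfst))))).inter
      (hμ.preimage (hpair.comp (hh.comp (hsnd.comp hfst)) (hsnd.comp hsnd)))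
  convert hν.inter hcodes.exists_pair using 1
  ext q
  simp [ltCodes, and_assoc]

section OrderedEmbedding

open Polynomial Set

variable {F K : Type*} [Field F] [LinearOrder F] [IsStrictOrderedRing F]
  [Field K] [LinearOrder K] [IsStrictOrderedRing K] {i : F →+* K}

theorem exists_lt_map_of_eval₂_eq_zero (hi : StrictMono i) {p : F[X]} (hp : p ≠ 0) {x : K}
    (hx : p.eval₂ i x = 0) : ∃ M : F, x < i M := by
  have map_abs (a : F) : i |a| = |i a| := by simp [abs_eq_max_neg, hi.monotone.map_max]
  rcases le_or_gt x 1 with hx1 | hx1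
  · exact ⟨2, by rw [map_ofNat]; linarith⟩
  have hxpos : 0 < x := zero_lt_one.trans hx1
  set S : F := ∑ j ∈ Finset.range p.natDegree, |p.coeff j|
  have hlead : 0 < |i p.leadingCoeff| :=
    abs_pos.2 ((map_ne_zero_iff i hi.injective).2 (leadingCoeff_ne_zero.2 hp))
  have hsplit : i p.leadingCoeff * x ^ p.natDegree =
      -∑ j ∈ Finset.range p.natDegree, i (p.coeff j) * x ^ j := by
    rw [eval₂_eq_sum_range, Finset.sum_range_succ] at hx
    rw [leadingCoeff]
    linear_combination hx
  obtain ⟨k, hk⟩ : ∃ k, p.natDegree = k + 1 := Nat.exists_eq_succ_of_ne_zero fun h0 => by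
    simp only [h0, pow_zero, mul_one, Finset.range_zero, Finset.sum_empty, neg_zero] at hsplit
    simp [hsplit] at hlead
  have hbound : |i p.leadingCoeff| * x ^ k * x ≤ i S * x ^ k :=
    calc |i p.leadingCoeff| * x ^ k * x
      _ = |∑ j ∈ Finset.range p.natDegree, i (p.coeff j) * x ^ j| := by
          rw [mul_assoc, ← pow_succ, ← hk, ← abs_of_pos (pow_pos hxpos p.natDegree), ← abs_mul,
            hsplit, abs_neg]
      _ ≤ ∑ j ∈ Finset.range p.natDegree, |i (p.coeff j)| * x ^ k := by
          refine (Finset.abs_sum_le_sum_abs _ _).trans (Finset.sum_le_sum fun j hj => ?_)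
          rw [abs_mul, abs_of_pos (pow_pos hxpos j)]
          gcongr
          · exact hx1.le
          · rw [Finset.mem_range] at hj; omega
      _ = i S * x ^ k := by simp [S, map_sum, map_abs, Finset.sum_mul]
  refine ⟨S / |p.leadingCoeff| + 1, ?_⟩
  have : x ≤ i S / |i p.leadingCoeff| := by
    rw [le_div_iff₀ hlead]
    nlinarith [pow_pos hxpos k]
  rw [map_add, map_one, map_div₀, map_abs]
  linarith

theorem exists_pos_map_lt (hi : StrictMono i)
    (halg : ∀ x : K, ∃ p : F[X], p ≠ 0 ∧ p.eval₂ i x = 0) {d : K} (hd : 0 < d) :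
    ∃ e : F, 0 < e ∧ i e < d := by
  obtain ⟨p, hp, hroot⟩ := halg d⁻¹
  obtain ⟨M, hM⟩ := exists_lt_map_of_eval₂_eq_zero hi hp hroot
  have hiM : 0 < i M := (inv_pos.2 hd).trans hM
  have hM0 : 0 < M := hi.lt_iff_lt.1 (by rwa [map_zero])
  exact ⟨M⁻¹, inv_pos.2 hM0, by rw [map_inv₀]; exact (inv_lt_comm₀ hiM hd).2 hM⟩

theorem exists_mem_Ioo_map_lt_map_lt (hi : StrictMono i)
    (halg : ∀ x : K, ∃ p : F[X], p ≠ 0 ∧ p.eval₂ i x = 0) {c c' : K} {x : F}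
    (hx : i x ∈ Ioo c c') : ∃ y z, x ∈ Ioo y z ∧ c < i y ∧ i z < c' := by
  obtain ⟨e, he, hie⟩ := exists_pos_map_lt hi halg (lt_min (sub_pos.2 hx.1) (sub_pos.2 hx.2))
  have := min_le_left (i x - c) (c' - i x)
  have := min_le_right (i x - c) (c' - i x)
  exact ⟨x - e, x + e, ⟨by linarith, by linarith⟩, by rw [map_sub]; linarith,
    by rw [map_add]; linarith⟩

theorem preimage_biUnion_Ioo (hi : StrictMono i)
    (halg : ∀ x : K, ∃ p : F[X], p ≠ 0 ∧ p.eval₂ i x = 0) {ν : ℕ → F}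
    (hν : Function.Surjective ν) (W : Set ℕ) (a b : ℕ → K) :
    i ⁻¹' ⋃ p ∈ W, Ioo (a p) (b p) =
      ⋃ q ∈ {q : ℕ | ν q.unpair.1 < ν q.unpair.2 ∧
        ∃ p ∈ W, a p < i (ν q.unpair.1) ∧ i (ν q.unpair.2) < b p},
        Ioo (ν q.unpair.1) (ν q.unpair.2) := by
  ext x
  simp only [mem_preimage, mem_iUnion, mem_ofPred_eq, exists_prop]
  constructor
  · rintro ⟨p, hp, hx⟩
    obtain ⟨y, z, hyz, hy, hz⟩ := exists_mem_Ioo_map_lt_map_lt hi halg hx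
    obtain ⟨n, rfl⟩ := hν y
    obtain ⟨k, rfl⟩ := hν z
    exact ⟨Nat.pair n k, by simpa using ⟨⟨hyz.1.trans hyz.2, p, hp, hy, hz⟩, hyz⟩⟩
  · rintro ⟨q, ⟨-, p, hp, hlo, hhi⟩, hx⟩
    exact ⟨p, hp, hlo.trans (hi hx.1), (hi hx.2).trans hhi⟩

end OrderedEmbedding

/-- Effective topological consistency: if `i : F → K` is an order-preserving embedding of
order positive fields such that `K` is algebraic over the image of `F` and `ν` is
reducible to `μ`, then preimages of effectively open sets are effectively open. -/
theorem effOpen_preimage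
    {F K : Type*} [Field F] [LinearOrder F] [IsStrictOrderedRing F]
    [Field K] [LinearOrder K] [IsStrictOrderedRing K]
    (ν : ℕ → F) (μ : ℕ → K) (hν : OrderPosPres F ν) (hμ : OrderPosPres K μ)
    (i : F →+* K) (hi : StrictMono i)
    (halg : ∀ x : K, ∃ p : Polynomial F, p ≠ 0 ∧ Polynomial.eval₂ i x p = 0)
    (h : ℕ → ℕ) (hcomp : Computable h) (hred : ∀ n, μ (h n) = i (ν n))
    (U : Set K) (hU : EffOpen μ U) :
    EffOpen ν (⇑i ⁻¹' U) := by
  obtain ⟨W, hW, -, rfl⟩ := hU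
  refine ⟨_, ceSet_subinterval_codes hν.ceSet_ltCodes hμ.ceSet_ltCodes hcomp hW,
    fun q hq => hq.1, ?_⟩
  refine (preimage_biUnion_Ioo hi halg hν.surj W _ _).trans ?_
  simp only [hred]
end

section
/- Let F be a subfield of ℝ, let f be a polynomial with coefficients in F, and let A, B, y ∈ F with A < B (regarded as real numbers). Then y > sSup { f(x) | x ∈ [A,B] } if and only if there exists δ ∈ F with δ > 0 such that the polynomial f' − δ (the derivative of f minus the constant δ, as a polynomial over F) is separable, and y > sSup { f(x) − δ·x | x ∈ [A,B] } + δ · max(|A|, |B|). -/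
/-!
For every `δ ≥ 0` and `x ∈ [A, B]` we have `|δ x| ≤ δ M` with `M = max |A| |B|`, so
`sup f ≤ sup (f - δ x) + δ M` and `sup (f - δ x) ≤ sup f + δ M`. The first inequality gives the
implication from right to left; by the second, any `δ < (y - sup f) / (2M + 1)` works from left to
right. Such a `δ` can be chosen in `F` and admissible, because `f' - δ` is inseparable only when
`δ` is one of the finitely many critical values of `f'`.
-/

open Polynomial

namespace Polynomial

theorem exists_isRoot_derivative_of_not_separable {K : Type*} [Field K] [IsAlgClosed K]
    {p : K[X]} (hp : p ≠ 0) (h : ¬p.Separable) : ∃ x, p.IsRoot x ∧ p.derivative.IsRoot x := by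
  classical
  rw [← nodup_roots_iff_of_splits hp (IsAlgClosed.splits p), Multiset.nodup_iff_count_le_one]
    at h
  push Not at h
  obtain ⟨x, hx⟩ := h
  rw [count_roots] at hx
  exact ⟨x, (one_lt_rootMultiplicity_iff_isRoot hp).1 hx⟩

theorem finite_setOf_not_separable_sub_C {K : Type*} [Field K] [CharZero K] (g : K[X]) :
    {δ : K | ¬(g - C δ).Separable}.Finite := by
  by_cases hg : derivative g = 0
  · refine (Set.finite_singleton (g.coeff 0)).subset fun δ hδ => ?_
    rw [Set.mem_ofPred_eq, eq_C_of_derivative_eq_zero hg, ← C_sub] at hδ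
    by_contra hne
    exact hδ (separable_C _ |>.2 (sub_ne_zero.2 (Ne.symm hne)).isUnit)
  set L := AlgebraicClosure K
  -- a bad `δ` is a critical value `g(x)` of `g`, with `x` a root of `g'` in `L`
  refine ((((derivative g).rootSet_finite L).image fun x => aeval x g).preimage
    (algebraMap K L).injective.injOn).subset fun δ hδ => ?_
  have hne : (g - C δ).map (algebraMap K L) ≠ 0 := by
    refine map_ne_zero fun h => hg ?_
    rw [sub_eq_zero.1 h, derivative_C]
  obtain ⟨x, hx, hx'⟩ := exists_isRoot_derivative_of_not_separable hne
    (mt (separable_map _).1 hδ)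
  refine ⟨x, ?_, ?_⟩
  · simpa [mem_rootSet, hg, derivative_map] using hx'
  · simpa [sub_eq_zero, aeval_def, eval_map] using hx

theorem exists_mem_Ioo_separable_sub_C {K : Type*} [Field K] [LinearOrder K]
    [IsStrictOrderedRing K] (g : K[X]) {a b : K} (hab : a < b) :
    ∃ δ ∈ Set.Ioo a b, (g - C δ).Separable := by
  obtain ⟨δ, hδ, hsep⟩ :=
    ((Set.Ioo_infinite hab).sdiff (finite_setOf_not_separable_sub_C g)).nonempty
  exact ⟨δ, hδ, not_not.1 hsep⟩

theorem exists_pos_lt_separable_sub_C (F : Subfield ℝ) (g : F[X]) {ε : ℝ} (hε : 0 < ε) :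
    ∃ δ : F, 0 < δ ∧ (g - C δ).Separable ∧ (δ : ℝ) < ε := by
  obtain ⟨q, hq0, hqε⟩ := exists_rat_btwn hε
  obtain ⟨δ, ⟨hδ0, hδq⟩, hsep⟩ :=
    exists_mem_Ioo_separable_sub_C g (Rat.cast_pos.2 (by exact_mod_cast hq0) : (0 : F) < q)
  exact ⟨δ, hδ0, hsep, lt_trans (by exact_mod_cast hδq) hqε⟩

end Polynomial

theorem csSup_image_le_csSup_image_add {α : Type*} {s : Set α} (hs : s.Nonempty)
    {u v : α → ℝ} (hv : BddAbove (v '' s)) {c : ℝ} (huv : ∀ x ∈ s, u x ≤ v x + c) :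
    sSup (u '' s) ≤ sSup (v '' s) + c :=
  csSup_le (hs.image u) <| Set.forall_mem_image.2 fun x hx =>
    (huv x hx).trans <| add_le_add_left (le_csSup hv (Set.mem_image_of_mem v hx)) c

theorem abs_mul_le_mul_max_abs {δ x a b : ℝ} (hδ : 0 ≤ δ) (hx : x ∈ Set.Icc a b) :
    |δ * x| ≤ δ * max |a| |b| := by
  rw [abs_mul, abs_of_nonneg hδ]
  exact mul_le_mul_of_nonneg_left (abs_le_max_abs_abs hx.1 hx.2) hδ

/-- Lemma 1(1): for a subfield `F ⊆ ℝ`, a polynomial `f ∈ F[X]` and `A, B, y ∈ F` with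
`A < B`, one has `y > sup_{x ∈ [A,B]} f(x)` iff there is an admissible `δ > 0` in `F`
(i.e. `f' - δ` is separable) with
`y > sup_{x ∈ [A,B]} (f(x) - δ·x) + δ·max(|A|,|B|)`. -/
theorem gt_sSup_iff_exists_admissible
    (F : Subfield ℝ) (f : Polynomial F) (A B y : F) (hAB : (A : ℝ) < B) :
    sSup {z : ℝ | ∃ x ∈ Set.Icc (A : ℝ) (B : ℝ), Polynomial.eval₂ F.subtype x f = z}
        < (y : ℝ) ↔
      ∃ δ : F, 0 < δ ∧ (derivative f - C δ).Separable ∧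
        sSup {z : ℝ | ∃ x ∈ Set.Icc (A : ℝ) (B : ℝ),
            Polynomial.eval₂ F.subtype x f - (δ : ℝ) * x = z}
          + (δ : ℝ) * max |(A : ℝ)| |(B : ℝ)| < (y : ℝ) := by
  set I := Set.Icc (A : ℝ) B
  set g : ℝ → ℝ := fun x => f.eval₂ F.subtype x
  set M := max |(A : ℝ)| |(B : ℝ)|
  have hI : I.Nonempty := Set.nonempty_Icc.2 hAB.le
  have hg : Continuous g := f.continuous_eval₂ F.subtype
  change sSup (g '' I) < y ↔
    ∃ δ : F, 0 < δ ∧ _ ∧ sSup ((fun x => g x - δ * x) '' I) + δ * M < y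
  constructor
  · intro hy
    obtain ⟨δ, hδ0, hsep, hδ⟩ := exists_pos_lt_separable_sub_C F (derivative f)
      (div_pos (sub_pos.2 hy) (by positivity : (0 : ℝ) < 2 * M + 1))
    refine ⟨δ, hδ0, hsep, ?_⟩
    have hδM : δ * (2 * M + 1) < y - sSup (g '' I) := (lt_div_iff₀ (by positivity)).1 hδ
    have hsup := csSup_image_le_csSup_image_add (u := fun x => g x - δ * x) (c := δ * M) hI
      (isCompact_Icc.image hg).bddAbove fun x hx => by
        linarith [neg_abs_le ((δ : ℝ) * x), abs_mul_le_mul_max_abs hδ0.le hx]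
    linarith [show (0 : ℝ) < δ from hδ0]
  · rintro ⟨δ, hδ0, -, hy⟩
    refine lt_of_le_of_lt (csSup_image_le_csSup_image_add hI
      (isCompact_Icc.image (by fun_prop)).bddAbove fun x hx => ?_) hy
    linarith [(le_abs_self _).trans (abs_mul_le_mul_max_abs hδ0.le hx)]
end

section
/- Let F be a subfield of ℝ, let f be a polynomial with coefficients in F, and let A, B, y ∈ F with A < B (regarded as real numbers). Then y < sSup { f(x) | x ∈ [A,B] } if and only if there exists δ ∈ F with δ > 0 such that the polynomial f' − δ (the derivative of f minus the constant δ, as a polynomial over F) is separable, and y < sSup { f(x) − δ·x | x ∈ [A,B] } − δ · max(|A|, |B|). -/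
/-!
On `[A, B]` the functions `f` and `x ↦ f x - δ * x` differ by at most `δ · max |A| |B|`, hence so do
their suprema. This gives the backward implication at once, and the forward one for every
sufficiently small `δ > 0`. Admissible `δ` can be taken arbitrarily small: `f' - δ` fails to be
separable only if `δ` is a critical value of `f'`, i.e. `δ = f'(a)` for a root `a` of `f''` in an
algebraic closure, and there are finitely many of those.
-/

open Polynomial

theorem Polynomial.finite_setOf_not_separable_sub_C_s4 {K : Type*} [Field K] [CharZero K]
    (g : K[X]) : {c : K | ¬ (g - C c).Separable}.Finite := by
  by_cases hg : derivative g = 0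
  · refine (Set.finite_singleton (g.coeff 0)).subset fun c hc => ?_
    by_contra hne
    rw [Set.mem_ofPred_eq, eq_C_of_derivative_eq_zero hg, ← C_sub, separable_C] at hc
    exact hc (sub_ne_zero.2 (Ne.symm hne)).isUnit
  · set L := AlgebraicClosure K
    have hcrit : ∀ c : K, ¬ (g - C c).Separable →
        algebraMap K L c ∈ (fun a => aeval a g) '' (derivative g).rootSet L := by
      intro c hc
      rw [Separable, derivative_sub, derivative_C, sub_zero,
        isCoprime_iff_aeval_ne_zero_of_isAlgClosed K L] at hc
      push Not at hc
      obtain ⟨a, hac, ha⟩ := hc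
      refine ⟨a, mem_rootSet.2 ⟨hg, ha⟩, ?_⟩
      rwa [map_sub, aeval_C, sub_eq_zero] at hac
    exact (((derivative g).rootSet L).toFinite.image _).preimage
      (FaithfulSMul.algebraMap_injective K L).injOn |>.subset hcrit

theorem Polynomial.exists_pos_lt_separable_sub_C_s4 {K : Type*} [Field K] [LinearOrder K]
    [IsStrictOrderedRing K] (g : K[X]) {ε : K} (hε : 0 < ε) :
    ∃ δ, 0 < δ ∧ δ < ε ∧ (g - C δ).Separable := by
  obtain ⟨δ, ⟨hδ0, hδε⟩, hδ⟩ :=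
    ((Set.Ioo_infinite hε).sdiff g.finite_setOf_not_separable_sub_C_s4).nonempty
  exact ⟨δ, hδ0, hδε, not_not.1 hδ⟩

theorem Subfield.exists_pos_lt_separable_sub_C_s4 {F : Subfield ℝ} (g : F[X]) {ε : ℝ}
    (hε : 0 < ε) : ∃ δ : F, 0 < δ ∧ (δ : ℝ) < ε ∧ (g - C δ).Separable := by
  obtain ⟨q, hq0, hqε⟩ := exists_rat_btwn hε
  obtain ⟨δ, hδ0, hδq, hδ⟩ :=
    g.exists_pos_lt_separable_sub_C_s4 (ε := (q : F)) (by exact_mod_cast hq0)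
  refine ⟨δ, hδ0, lt_trans ?_ hqε, hδ⟩
  exact_mod_cast hδq

theorem Real.abs_sSup_image_sub_sSup_image_le {α : Type*} {s : Set α} {f g : α → ℝ} {c : ℝ}
    (hf : BddAbove (f '' s)) (hg : BddAbove (g '' s)) (hc : 0 ≤ c)
    (h : ∀ x ∈ s, |f x - g x| ≤ c) : |sSup (f '' s) - sSup (g '' s)| ≤ c := by
  rcases s.eq_empty_or_nonempty with rfl | hs
  · simpa using hc
  have bound {f g : α → ℝ} (hg : BddAbove (g '' s)) (h : ∀ x ∈ s, f x ≤ g x + c) :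
      sSup (f '' s) ≤ sSup (g '' s) + c :=
    csSup_le (hs.image f) <| Set.forall_mem_image.2 fun x hx =>
      (h x hx).trans (add_le_add_left (le_csSup hg (Set.mem_image_of_mem g hx)) c)
  refine abs_sub_le_iff.2 ⟨?_, ?_⟩
  · linarith [bound (f := f) hg fun x hx => by linarith [(abs_le.1 (h x hx)).2]]
  · linarith [bound (f := g) hf fun x hx => by linarith [(abs_le.1 (h x hx)).1]]

theorem Real.abs_sSup_image_Icc_sub_sSup_image_sub_mul_le {φ : ℝ → ℝ} (hφ : Continuous φ)
    (a b : ℝ) {δ : ℝ} (hδ : 0 ≤ δ) :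
    |sSup (φ '' Set.Icc a b) - sSup ((fun x => φ x - δ * x) '' Set.Icc a b)|
      ≤ δ * max |a| |b| := by
  refine Real.abs_sSup_image_sub_sSup_image_le (isCompact_Icc.bddAbove_image hφ.continuousOn)
    (isCompact_Icc.bddAbove_image (by fun_prop)) (by positivity) fun x hx => ?_
  rw [sub_sub_cancel, abs_mul, abs_of_nonneg hδ]
  exact mul_le_mul_of_nonneg_left (abs_le_max_abs_abs hx.1 hx.2) hδ

theorem lt_sSup_iff_exists_admissible_general
    (F : Subfield ℝ) (f : Polynomial F) (A B y : F) :
    (y : ℝ) < sSup {z : ℝ | ∃ x ∈ Set.Icc (A : ℝ) (B : ℝ),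
        Polynomial.eval₂ F.subtype x f = z} ↔
      ∃ δ : F, 0 < δ ∧ (derivative f - C δ).Separable ∧
        (y : ℝ) < sSup {z : ℝ | ∃ x ∈ Set.Icc (A : ℝ) (B : ℝ),
            Polynomial.eval₂ F.subtype x f - (δ : ℝ) * x = z}
          - (δ : ℝ) * max |(A : ℝ)| |(B : ℝ)| := by
  set K := max |(A : ℝ)| |(B : ℝ)|
  set M := sSup {z : ℝ | ∃ x ∈ Set.Icc (A : ℝ) (B : ℝ), Polynomial.eval₂ F.subtype x f = z}
  have hK : 0 ≤ K := le_max_of_le_left (abs_nonneg _)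
  have key (δ : F) (hδ : 0 < δ) : |M - sSup {z : ℝ | ∃ x ∈ Set.Icc (A : ℝ) (B : ℝ),
      Polynomial.eval₂ F.subtype x f - (δ : ℝ) * x = z}| ≤ δ * K :=
    Real.abs_sSup_image_Icc_sub_sSup_image_sub_mul_le (f.continuous_eval₂ F.subtype) A B
      (by exact_mod_cast hδ.le)
  constructor
  · intro hy
    obtain ⟨δ, hδ0, hδε, hδ⟩ :=
      Subfield.exists_pos_lt_separable_sub_C_s4 (derivative f) (ε := (M - y) / (2 * K + 1))
        (div_pos (by linarith) (by linarith))
    have hδ0' : (0 : ℝ) < δ := by exact_mod_cast hδ0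
    refine ⟨δ, hδ0, hδ, ?_⟩
    rw [lt_div_iff₀ (by linarith)] at hδε
    linarith [(abs_sub_le_iff.1 (key δ hδ0)).1]
  · rintro ⟨δ, hδ0, -, hy⟩
    linarith [(abs_sub_le_iff.1 (key δ hδ0)).2]

/-- Lemma 1(2): for a subfield `F ⊆ ℝ`, a polynomial `f ∈ F[X]` and `A, B, y ∈ F` with
`A < B`, one has `y < sup_{x ∈ [A,B]} f(x)` iff there is an admissible `δ > 0` in `F`
(i.e. `f' - δ` is separable) with
`y < sup_{x ∈ [A,B]} (f(x) - δ·x) - δ·max(|A|,|B|)`. -/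
theorem lt_sSup_iff_exists_admissible
    (F : Subfield ℝ) (f : Polynomial F) (A B y : F) (hAB : (A : ℝ) < B) :
    (y : ℝ) < sSup {z : ℝ | ∃ x ∈ Set.Icc (A : ℝ) (B : ℝ),
        Polynomial.eval₂ F.subtype x f = z} ↔
      ∃ δ : F, 0 < δ ∧ (derivative f - C δ).Separable ∧
        (y : ℝ) < sSup {z : ℝ | ∃ x ∈ Set.Icc (A : ℝ) (B : ℝ),
            Polynomial.eval₂ F.subtype x f - (δ : ℝ) * x = z}
          - (δ : ℝ) * max |(A : ℝ)| |(B : ℝ)| :=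
  lt_sSup_iff_exists_admissible_general F f A B y
end

section
/- Let F be a subfield of ℝ, let f be a polynomial with coefficients in F that is coprime with its derivative f' (i.e., f has no multiple roots), and let A, B ∈ F. Then there exists λ ∈ F with λ > 0 such that for every real number β ∈ [A, B] with f(β) = 0, one has |f'(β)| > λ. -/
open Polynomial

/-- For a polynomial `f` over a subfield `F ⊆ ℝ` that is coprime with its derivative
(no multiple roots) and `A, B ∈ F`, there exists `λ ∈ F`, `λ > 0`, bounding `|f'|` from
below at every root of `f` in `[A, B]`. -/
theorem exists_lambda_lt_abs_deriv_at_roots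
    (F : Subfield ℝ) (f : Polynomial F) (hcop : IsCoprime f (derivative f)) (A B : F) :
    ∃ lam : F, 0 < lam ∧
      ∀ β : ℝ, β ∈ Set.Icc (A : ℝ) (B : ℝ) → Polynomial.eval₂ F.subtype β f = 0 →
        (lam : ℝ) < |Polynomial.eval₂ F.subtype β (derivative f)| := by
  have hf0 : f ≠ 0 := by
    rintro rfl
    simp only [map_zero, isCoprime_zero_left] at hcop
    exact not_isUnit_zero hcop
  set g : Polynomial ℝ := f.map F.subtype with hg
  have hg0 : g ≠ 0 := by
    simpa [hg, Polynomial.map_ne_zero_iff F.subtype.injective] using hf0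
  have hcopg : IsCoprime g (derivative g) := by
    rw [hg, derivative_map]
    simpa using hcop.map (mapRingHom F.subtype)
  -- at every root of g, derivative g is nonzero
  have hder : ∀ β : ℝ, g.eval β = 0 → (derivative g).eval β ≠ 0 := by
    intro β hβ
    obtain ⟨a, b, hab⟩ := hcopg
    intro h0
    have := congrArg (Polynomial.eval β) hab
    simp [hβ, h0] at this
  set T : Finset ℝ := g.roots.toFinset with hT
  set S : Finset ℝ := insert (1 : ℝ) (T.image fun x => |(derivative g).eval x|) with hS
  have hSne : S.Nonempty := ⟨1, Finset.mem_insert_self _ _⟩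
  set m : ℝ := S.min' hSne with hm
  have hpos : ∀ x ∈ S, 0 < x := by
    intro x hx
    rcases Finset.mem_insert.mp hx with rfl | h
    · norm_num
    · obtain ⟨y, hy, rfl⟩ := Finset.mem_image.mp h
      have hy0 : g.eval y = 0 := (mem_roots hg0).mp (Multiset.mem_toFinset.mp hy)
      exact abs_pos.mpr (hder y hy0)
  have hmpos : 0 < m := hpos _ (S.min'_mem hSne)
  obtain ⟨q, hq0, hqm⟩ := exists_rat_btwn hmpos
  refine ⟨(q : F), ?_, ?_⟩
  · have : ((q : F) : ℝ) = (q : ℝ) := map_ratCast F.subtype q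
    have h2 : (0:ℝ) < ((q:F) : ℝ) := by rw [this]; exact_mod_cast hq0
    exact_mod_cast h2
  · intro β hβIcc hβ
    have hβg : g.eval β = 0 := by rw [hg, eval_map]; exact hβ
    have hβT : β ∈ T := Multiset.mem_toFinset.mpr ((mem_roots hg0).mpr hβg)
    have hmem : |(derivative g).eval β| ∈ S :=
      Finset.mem_insert_of_mem (Finset.mem_image_of_mem _ hβT)
    have h1 : m ≤ |(derivative g).eval β| := S.min'_le _ hmem
    have h2 : Polynomial.eval₂ F.subtype β (derivative f) = (derivative g).eval β := by
      rw [hg, derivative_map, eval_map]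
    have hcast : ((q : F) : ℝ) = (q : ℝ) := map_ratCast F.subtype q
    rw [h2, hcast]
    calc (q : ℝ) < m := by exact_mod_cast hqm
      _ ≤ _ := h1
end

section
/- Let f be a nonconstant polynomial over ℝ, and let A < B be real numbers with f(A) ≠ 0, f(B) ≠ 0, such that every real root of f lies in the open interval (A, B). Let δ > 0 be a real number such that 2·δ < |f'(β)| for every real root β of f, and such that f'(A) ∉ {−δ, δ} and f'(B) ∉ {−δ, δ}. Define J = {A, B} ∪ {x ∈ [A,B] | f'(x) = δ or f'(x) = −δ}. Then for every real root β of f there exist β₁, β₂ ∈ J with β₁ < β < β₂, f(β₁)·f(β₂) < 0, and no element of J lies strictly between β₁ and β₂. -/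
open Polynomial

/-- If `f(β) = 0`, `f'(β) > 2δ > 0`, and `f'` never takes the value `δ` on `(β₁, β₂) ∋ β`,
then `f' > δ` on all of `(β₁, β₂)`, hence `f` is strictly increasing there and
`f(β₁) < 0 < f(β₂)`. -/
lemma aux_sign_change (f : Polynomial ℝ) (δ : ℝ) (hδ : 0 < δ) (β₁ β β₂ : ℝ)
    (h1 : β₁ < β) (h2 : β < β₂) (hβ : f.eval β = 0)
    (hd : 2 * δ < (derivative f).eval β)
    (hno : ∀ x ∈ Set.Ioo β₁ β₂, (derivative f).eval x ≠ δ) :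
    f.eval β₁ * f.eval β₂ < 0 := by
  have hcont : Continuous fun x : ℝ => (derivative f).eval x := Polynomial.continuous _
  -- f' > δ on the whole open interval
  have key : ∀ x ∈ Set.Ioo β₁ β₂, δ < (derivative f).eval x := by
    intro x hx
    by_contra hle
    push_neg at hle
    have hne : (derivative f).eval x ≠ δ := hno x hx
    have hlt : (derivative f).eval x < δ := lt_of_le_of_ne hle hne
    rcases lt_trichotomy x β with hxb | hxb | hxb
    · -- IVT on [x, β]
      have hmem : δ ∈ Set.Ioo ((fun y : ℝ => (derivative f).eval y) x)
          ((fun y : ℝ => (derivative f).eval y) β) := ⟨hlt, by linarith⟩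
      obtain ⟨y, hy, hyδ⟩ := intermediate_value_Ioo (le_of_lt hxb) hcont.continuousOn hmem
      exact hno y ⟨lt_trans hx.1 hy.1, lt_trans hy.2 h2⟩ hyδ
    · subst hxb; linarith
    · -- IVT on [β, x]
      have hmem : δ ∈ Set.Ioo ((fun y : ℝ => (derivative f).eval y) x)
          ((fun y : ℝ => (derivative f).eval y) β) := ⟨hlt, by linarith⟩
      obtain ⟨y, hy, hyδ⟩ := intermediate_value_Ioo' (le_of_lt hxb) hcont.continuousOn hmem
      exact hno y ⟨lt_trans h1 hy.1, lt_trans hy.2 hx.2⟩ hyδ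
  have hβ₁₂ : β₁ < β₂ := lt_trans h1 h2
  have hmono : StrictMonoOn (fun x : ℝ => f.eval x) (Set.Icc β₁ β₂) := by
    apply strictMonoOn_of_deriv_pos (convex_Icc β₁ β₂) (f.continuous).continuousOn
    intro x hx
    rw [interior_Icc] at hx
    rw [Polynomial.deriv]
    linarith [key x hx]
  have hm1 : f.eval β₁ < f.eval β := by
    have := hmono ⟨le_refl β₁, le_of_lt hβ₁₂⟩ ⟨le_of_lt h1, le_of_lt h2⟩ h1
    simpa using this
  have hm2 : f.eval β < f.eval β₂ := by
    have := hmono ⟨le_of_lt h1, le_of_lt h2⟩ ⟨le_of_lt hβ₁₂, le_refl β₂⟩ h2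
    simpa using this
  rw [hβ] at hm1 hm2
  exact mul_neg_of_neg_of_pos hm1 hm2

/-- Root separation, existence part: under the stated hypotheses on `f`, `A`, `B`, `δ`,
every real root `β` of `f` lies strictly between two adjacent elements `β₁ < β₂` of the
finite set `J = {A, B} ∪ {x ∈ [A,B] | f'(x) = ±δ}` at which `f` changes sign. -/
theorem root_between_adjacent_sign_change
    (f : Polynomial ℝ) (hf : 0 < f.natDegree) (A B : ℝ) (hAB : A < B)
    (hA : f.eval A ≠ 0) (hB : f.eval B ≠ 0)
    (hroots : ∀ β : ℝ, f.eval β = 0 → β ∈ Set.Ioo A B)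
    (δ : ℝ) (hδ : 0 < δ)
    (hδroots : ∀ β : ℝ, f.eval β = 0 → 2 * δ < |(derivative f).eval β|)
    (hδA : (derivative f).eval A ≠ -δ ∧ (derivative f).eval A ≠ δ)
    (hδB : (derivative f).eval B ≠ -δ ∧ (derivative f).eval B ≠ δ) :
    ∀ β : ℝ, f.eval β = 0 →
      ∃ β₁ ∈ ({A, B} ∪ {x ∈ Set.Icc A B |
          (derivative f).eval x = δ ∨ (derivative f).eval x = -δ} : Set ℝ),
      ∃ β₂ ∈ ({A, B} ∪ {x ∈ Set.Icc A B |
          (derivative f).eval x = δ ∨ (derivative f).eval x = -δ} : Set ℝ),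
        β₁ < β ∧ β < β₂ ∧ f.eval β₁ * f.eval β₂ < 0 ∧
        ∀ z ∈ ({A, B} ∪ {x ∈ Set.Icc A B |
            (derivative f).eval x = δ ∨ (derivative f).eval x = -δ} : Set ℝ),
          ¬(β₁ < z ∧ z < β₂) := by
  intro β hβ
  set J : Set ℝ := {A, B} ∪ {x ∈ Set.Icc A B |
      (derivative f).eval x = δ ∨ (derivative f).eval x = -δ} with hJ
  have hβAB : β ∈ Set.Ioo A B := hroots β hβ
  -- J is finite
  have hp1 : derivative f - C δ ≠ 0 := by
    intro h
    apply hδA.2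
    have : derivative f = C δ := sub_eq_zero.mp h
    rw [this, eval_C]
  have hp2 : derivative f + C δ ≠ 0 := by
    intro h
    apply hδA.1
    have : derivative f = -C δ := eq_neg_of_add_eq_zero_left h
    rw [this, eval_neg, eval_C]
  have hJfin : J.Finite := by
    apply Set.Finite.subset (Set.Finite.union (Set.Finite.union
      (Set.toFinite ({A, B} : Set ℝ))
      (Polynomial.finite_setOf_isRoot hp1)) (Polynomial.finite_setOf_isRoot hp2))
    rintro x (hx | ⟨-, hx | hx⟩)
    · exact Or.inl (Or.inl hx)
    · exact Or.inl (Or.inr (by simp [IsRoot, hx]))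
    · exact Or.inr (by simp [IsRoot, hx])
  have hJIcc : J ⊆ Set.Icc A B := by
    rintro x (hx | hx)
    · simp only [Set.mem_insert_iff, Set.mem_singleton_iff] at hx
      rcases hx with rfl | rfl
      · exact Set.mem_Icc.mpr ⟨le_refl _, le_of_lt hAB⟩
      · exact Set.mem_Icc.mpr ⟨le_of_lt hAB, le_refl _⟩
    · exact hx.1
  have hAJ : A ∈ J := Or.inl (Or.inl rfl)
  have hBJ : B ∈ J := Or.inl (Or.inr rfl)
  -- β itself is not in J
  have hβd := hδroots β hβ
  have hβδ : (derivative f).eval β ≠ δ ∧ (derivative f).eval β ≠ -δ := by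
    constructor
    · intro h; rw [h, abs_of_pos hδ] at hβd; linarith
    · intro h; rw [h, abs_neg, abs_of_pos hδ] at hβd; linarith
  have hβJ : β ∉ J := by
    rintro (hx | ⟨-, hx | hx⟩)
    · simp only [Set.mem_insert_iff, Set.mem_singleton_iff] at hx
      rcases hx with rfl | rfl
      · exact absurd hβAB.1 (lt_irrefl _)
      · exact absurd hβAB.2 (lt_irrefl _)
    · exact hβδ.1 hx
    · exact hβδ.2 hx
  -- β₁ : maximum of J below β
  have hSfin : (J ∩ Set.Iio β).Finite := hJfin.inter_of_left _
  have hSne : (hSfin.toFinset).Nonempty :=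
    ⟨A, hSfin.mem_toFinset.mpr ⟨hAJ, hβAB.1⟩⟩
  set β₁ := hSfin.toFinset.max' hSne with hβ₁def
  have hβ₁mem : β₁ ∈ J ∩ Set.Iio β := hSfin.mem_toFinset.mp (hSfin.toFinset.max'_mem hSne)
  have hβ₁max : ∀ z ∈ J, z < β → z ≤ β₁ := fun z hz hzβ =>
    hSfin.toFinset.le_max' z (hSfin.mem_toFinset.mpr ⟨hz, hzβ⟩)
  -- β₂ : minimum of J above β
  have hTfin : (J ∩ Set.Ioi β).Finite := hJfin.inter_of_left _
  have hTne : (hTfin.toFinset).Nonempty :=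
    ⟨B, hTfin.mem_toFinset.mpr ⟨hBJ, hβAB.2⟩⟩
  set β₂ := hTfin.toFinset.min' hTne with hβ₂def
  have hβ₂mem : β₂ ∈ J ∩ Set.Ioi β := hTfin.mem_toFinset.mp (hTfin.toFinset.min'_mem hTne)
  have hβ₂min : ∀ z ∈ J, β < z → β₂ ≤ z := fun z hz hzβ =>
    hTfin.toFinset.min'_le z (hTfin.mem_toFinset.mpr ⟨hz, hzβ⟩)
  have h1 : β₁ < β := hβ₁mem.2
  have h2 : β < β₂ := hβ₂mem.2
  have hadj : ∀ z ∈ J, ¬(β₁ < z ∧ z < β₂) := by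
    rintro z hz ⟨hz1, hz2⟩
    rcases lt_trichotomy z β with h | h | h
    · exact absurd (hβ₁max z hz h) (not_le.mpr hz1)
    · exact hβJ (h ▸ hz)
    · exact absurd (hβ₂min z hz h) (not_le.mpr hz2)
  -- no δ or -δ value of f' inside (β₁, β₂)
  have hno : ∀ x ∈ Set.Ioo β₁ β₂, (derivative f).eval x ≠ δ ∧ (derivative f).eval x ≠ -δ := by
    intro x hx
    have hxIcc : x ∈ Set.Icc A B := by
      have hA₁ : A ≤ β₁ := (hJIcc hβ₁mem.1).1
      have hB₂ : β₂ ≤ B := (hJIcc hβ₂mem.1).2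
      exact ⟨le_of_lt (lt_of_le_of_lt hA₁ hx.1), le_of_lt (lt_of_lt_of_le hx.2 hB₂)⟩
    constructor <;> intro h <;>
      exact hadj x (Or.inr ⟨hxIcc, by tauto⟩) ⟨hx.1, hx.2⟩
  -- sign change
  have hsign : f.eval β₁ * f.eval β₂ < 0 := by
    rcases lt_abs.mp hβd with hpos | hneg
    · exact aux_sign_change f δ hδ β₁ β β₂ h1 h2 hβ hpos (fun x hx => (hno x hx).1)
    · have := aux_sign_change (-f) δ hδ β₁ β β₂ h1 h2 (by simp [hβ])
        (by simpa using hneg)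
        (fun x hx => by
          simp only [derivative_neg, eval_neg]
          intro h
          exact (hno x hx).2 (by linarith))
      simpa [neg_mul_neg] using this
  exact ⟨β₁, hβ₁mem.1, β₂, hβ₂mem.1, h1, h2, hsign, hadj⟩
end

section
/- Let f be a nonconstant polynomial over ℝ, and let A < B be real numbers with f(A) ≠ 0, f(B) ≠ 0, such that every real root of f lies in the open interval (A, B). Let δ > 0 be a real number such that 2·δ < |f'(β)| for every real root β of f, and such that f'(A) ∉ {−δ, δ} and f'(B) ∉ {−δ, δ}. Define J = {A, B} ∪ {x ∈ [A,B] | f'(x) = δ or f'(x) = −δ}. Then for all β₁, β₂ ∈ J with β₁ < β₂ such that no element of J lies strictly between β₁ and β₂ and f(β₁)·f(β₂) < 0, there exists exactly one real number β ∈ (β₁, β₂) with f(β) = 0. -/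
open Polynomial

/-- Root separation, uniqueness part: under the stated hypotheses on `f`, `A`, `B`, `δ`,
between any two adjacent elements `β₁ < β₂` of the set
`J = {A, B} ∪ {x ∈ [A,B] | f'(x) = ±δ}` with `f(β₁)·f(β₂) < 0` there lies exactly one
real root of `f`. -/
theorem existsUnique_root_between_adjacent
    (f : Polynomial ℝ) (hf : 0 < f.natDegree) (A B : ℝ) (hAB : A < B)
    (hA : f.eval A ≠ 0) (hB : f.eval B ≠ 0)
    (hroots : ∀ β : ℝ, f.eval β = 0 → β ∈ Set.Ioo A B)
    (δ : ℝ) (hδ : 0 < δ)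
    (hδroots : ∀ β : ℝ, f.eval β = 0 → 2 * δ < |(derivative f).eval β|)
    (hδA : (derivative f).eval A ≠ -δ ∧ (derivative f).eval A ≠ δ)
    (hδB : (derivative f).eval B ≠ -δ ∧ (derivative f).eval B ≠ δ) :
    ∀ β₁ ∈ ({A, B} ∪ {x ∈ Set.Icc A B |
        (derivative f).eval x = δ ∨ (derivative f).eval x = -δ} : Set ℝ),
    ∀ β₂ ∈ ({A, B} ∪ {x ∈ Set.Icc A B |
        (derivative f).eval x = δ ∨ (derivative f).eval x = -δ} : Set ℝ),
      β₁ < β₂ →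
      (∀ z ∈ ({A, B} ∪ {x ∈ Set.Icc A B |
          (derivative f).eval x = δ ∨ (derivative f).eval x = -δ} : Set ℝ),
        ¬(β₁ < z ∧ z < β₂)) →
      f.eval β₁ * f.eval β₂ < 0 →
      ∃! β : ℝ, β ∈ Set.Ioo β₁ β₂ ∧ f.eval β = 0 := by
  intro β₁ hβ₁ β₂ hβ₂ hlt hadj hsign
  have hIcc : ∀ x : ℝ, x ∈ ({A, B} ∪ {x ∈ Set.Icc A B |
      (derivative f).eval x = δ ∨ (derivative f).eval x = -δ} : Set ℝ) → x ∈ Set.Icc A B := by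
    intro x hx
    rcases hx with hx | hx
    · rcases hx with hx | hx <;> subst hx
      · exact Set.left_mem_Icc.mpr hAB.le
      · exact Set.right_mem_Icc.mpr hAB.le
    · exact hx.1
  have h₁ : β₁ ∈ Set.Icc A B := hIcc β₁ hβ₁
  have h₂ : β₂ ∈ Set.Icc A B := hIcc β₂ hβ₂
  have hsub : Set.Ioo β₁ β₂ ⊆ Set.Icc A B := fun z hz =>
    ⟨h₁.1.trans hz.1.le, hz.2.le.trans h₂.2⟩
  have hne : ∀ z ∈ Set.Ioo β₁ β₂,
      (derivative f).eval z ≠ δ ∧ (derivative f).eval z ≠ -δ := by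
    intro z hz
    constructor <;> intro h <;>
      exact hadj z (Or.inr ⟨hsub hz, by simp [h]⟩) ⟨hz.1, hz.2⟩
  have hcont : ContinuousOn (fun x => f.eval x) (Set.Icc β₁ β₂) :=
    f.continuous_aeval.continuousOn
  have hex : ∃ β ∈ Set.Ioo β₁ β₂, f.eval β = 0 := by
    rcases mul_neg_iff.mp hsign with ⟨h1, h2⟩ | ⟨h1, h2⟩
    · rcases intermediate_value_Ioo' hlt.le hcont ⟨h2, h1⟩ with ⟨β, hβ, hβ0⟩
      exact ⟨β, hβ, hβ0⟩
    · rcases intermediate_value_Ioo hlt.le hcont ⟨h1, h2⟩ with ⟨β, hβ, hβ0⟩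
      exact ⟨β, hβ, hβ0⟩
  rcases hex with ⟨β, hβmem, hβ0⟩
  have hβδ : 2 * δ < |(derivative f).eval β| := hδroots β hβ0
  have hgcont : ContinuousOn (fun x => (derivative f).eval x) (Set.Ioo β₁ β₂) :=
    (derivative f).continuous_aeval.continuousOn
  have hordconn : Set.OrdConnected (Set.Ioo β₁ β₂) := Set.ordConnected_Ioo
  -- Constant sign of f' relative to ±δ on the open interval
  have key : (∀ z ∈ Set.Ioo β₁ β₂, δ < (derivative f).eval z) ∨
      (∀ z ∈ Set.Ioo β₁ β₂, (derivative f).eval z < -δ) := by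
    rcases lt_abs.mp hβδ with h | h
    · left
      intro z hz
      by_contra hc
      have hzlt : (derivative f).eval z < δ := lt_of_le_of_ne (not_lt.mp hc) (hne z hz).1
      have huicc : Set.uIcc z β ⊆ Set.Ioo β₁ β₂ := hordconn.uIcc_subset hz hβmem
      have : δ ∈ Set.uIcc ((derivative f).eval z) ((derivative f).eval β) := by
        rw [Set.mem_uIcc]
        left
        exact ⟨hzlt.le, (by linarith : δ ≤ (derivative f).eval β)⟩
      rcases intermediate_value_uIcc (hgcont.mono huicc) this with ⟨w, hw, hw0⟩
      exact (hne w (huicc hw)).1 hw0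
    · right
      intro z hz
      by_contra hc
      have hzgt : -δ < (derivative f).eval z := lt_of_le_of_ne' (not_lt.mp hc) (hne z hz).2
      have hβlt : (derivative f).eval β < -δ := by linarith
      have huicc : Set.uIcc z β ⊆ Set.Ioo β₁ β₂ := hordconn.uIcc_subset hz hβmem
      have : -δ ∈ Set.uIcc ((derivative f).eval z) ((derivative f).eval β) := by
        rw [Set.mem_uIcc]
        right
        exact ⟨hβlt.le, hzgt.le⟩
      rcases intermediate_value_uIcc (hgcont.mono huicc) this with ⟨w, hw, hw0⟩
      exact (hne w (huicc hw)).2 hw0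
  have hderiv : ∀ x : ℝ, deriv (fun y => f.eval y) x = (derivative f).eval x := fun x =>
    Polynomial.deriv f
  have hinj : Set.InjOn (fun x => f.eval x) (Set.Ioo β₁ β₂) := by
    rcases key with hpos | hneg
    · have hmono : StrictMonoOn (fun x => f.eval x) (Set.Icc β₁ β₂) := by
        apply strictMonoOn_of_deriv_pos (convex_Icc β₁ β₂) hcont
        intro x hx
        rw [interior_Icc] at hx
        rw [hderiv x]
        exact hδ.trans (hpos x hx)
      exact (hmono.injOn).mono Set.Ioo_subset_Icc_self
    · have hmono : StrictAntiOn (fun x => f.eval x) (Set.Icc β₁ β₂) := by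
        apply strictAntiOn_of_deriv_neg (convex_Icc β₁ β₂) hcont
        intro x hx
        rw [interior_Icc] at hx
        rw [hderiv x]
        exact (hneg x hx).trans (by linarith)
      exact (hmono.injOn).mono Set.Ioo_subset_Icc_self
  refine ⟨β, ⟨hβmem, hβ0⟩, ?_⟩
  rintro y ⟨hymem, hy0⟩
  exact hinj hymem hβmem (by simp [hy0, hβ0])
end

section
/- Let K be a linear ordered field and t ∈ K an element greater than every rational number (i.e., (q : K) < t for every q ∈ ℚ). Suppose s, c ∈ K satisfy s > 0, c > 0, s² = t and c³ = t. Then for all α, β in the subfield of K generated by {t} (which is a copy of the rational function field ℚ(t)), if α < s and s < β, then also α < c and c < β. In other words, no interval of K with endpoints in ℚ(t) contains the square root of t without also containing the cube root of t, so these two roots of the polynomial (x² − t)(x³ − t) cannot be separated by intervals with endpoints in F = ℚ(t). -/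
/-!
Since `t` exceeds every rational, the archimedean class of a nonzero integer polynomial in
`t` is that of its leading power `t ^ deg`, so every nonzero element of `ℚ(t)` has the archimedean
class of some `t ^ k` with `k ∈ ℤ`. If `c ≤ α < s`, then `t² ≤ α⁶ < t³`, so the class of
`t ^ (6k)` lies between those of `t²` and `t³`; as `k ↦ mk (t ^ k)` is strictly antitone,
this forces `2 ≤ 6k ≤ 3`.
-/

open ArchimedeanClass Polynomial

theorem Subfield.exists_aeval_div_aeval_of_mem_closure_singleton {K : Type*} [Field K] {t x : K}
    (hx : x ∈ Subfield.closure {t}) : ∃ p q : ℤ[X], aeval t p / aeval t q = x := by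
  have range_aeval : ∀ y ∈ Subring.closure {t}, ∃ p : ℤ[X], aeval t p = y := fun y hy ↦ by
    have hy : y ∈ Algebra.adjoin ℤ {t} := by rwa [Algebra.adjoin_int]
    rwa [Algebra.adjoin_singleton_eq_range_aeval] at hy
  obtain ⟨y, hy, z, hz, rfl⟩ := Subfield.mem_closure_iff.mp hx
  obtain ⟨p, rfl⟩ := range_aeval y hy
  obtain ⟨q, rfl⟩ := range_aeval z hz
  exact ⟨p, q, rfl⟩

namespace ArchimedeanClass

variable {K : Type*} [Field K] [LinearOrder K] [IsStrictOrderedRing K] {t : K}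

theorem strictAnti_mk_zpow (ht : ∀ q : ℚ, (q : K) < t) :
    StrictAnti fun n : ℤ ↦ mk (t ^ n) := by
  have ht1 : 1 ≤ t := by exact_mod_cast (ht 1).le
  have ht0 : 0 < t := one_pos.trans_le ht1
  intro n m hnm
  refine mk_lt_mk.mpr fun N ↦ ?_
  have htm : t ≤ t ^ (m - n) := by
    simpa using zpow_le_zpow_right₀ ht1 (by omega : (1 : ℤ) ≤ m - n)
  rw [abs_of_pos (zpow_pos ht0 m), abs_of_pos (zpow_pos ht0 n), nsmul_eq_mul]
  calc (N : K) * t ^ n < t * t ^ n := by gcongr; exact_mod_cast ht N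
    _ ≤ t ^ (m - n) * t ^ n := by gcongr
    _ = t ^ m := by rw [zpow_sub₀ ht0.ne', div_mul_cancel₀ _ (zpow_pos ht0 n).ne']

theorem mk_zpow_natDegree_le_mk_aeval (ht : ∀ q : ℚ, (q : K) < t) (p : ℤ[X]) :
    mk (t ^ (p.natDegree : ℤ)) ≤ mk (aeval t p) := by
  rw [aeval_eq_sum_range, ← addValuation_apply]
  refine (addValuation K).map_le_sum fun i hi ↦ ?_
  have hi : i ≤ p.natDegree := Nat.lt_succ_iff.mp (Finset.mem_range.mp hi)
  calc mk (t ^ (p.natDegree : ℤ)) ≤ mk (t ^ (i : ℤ)) :=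
        (strictAnti_mk_zpow ht).antitone (by exact_mod_cast hi)
    _ ≤ mk (p.coeff i : K) + mk (t ^ (i : ℤ)) := le_add_of_nonneg_left (mk_intCast_nonneg _)
    _ = addValuation K (p.coeff i • t ^ i) := by
        rw [addValuation_apply, zsmul_eq_mul, mk_mul, zpow_natCast]

theorem mk_aeval_eq_mk_zpow_natDegree (ht : ∀ q : ℚ, (q : K) < t) {p : ℤ[X]} (hp : p ≠ 0) :
    mk (aeval t p) = mk (t ^ (p.natDegree : ℤ)) := by
  have hlead :
      mk (aeval t (C p.leadingCoeff * X ^ p.natDegree)) = mk (t ^ (p.natDegree : ℤ)) := by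
    simp [mk_intCast (leadingCoeff_ne_zero.mpr hp)]
  have hsplit :
      aeval t p = aeval t p.eraseLead + aeval t (C p.leadingCoeff * X ^ p.natDegree) := by
    rw [← map_add, p.eraseLead_add_C_mul_X_pow]
  rw [hsplit]
  rcases p.eraseLead_natDegree_lt_or_eraseLead_eq_zero with hlt | h0
  · refine (mk_add_eq_mk_right ?_).trans hlead
    rw [hlead]
    exact (strictAnti_mk_zpow ht (by exact_mod_cast hlt)).trans_le
      (mk_zpow_natDegree_le_mk_aeval ht _)
  · rw [h0, map_zero, zero_add, hlead]

theorem exists_mk_eq_mk_zpow_of_mem_closure (ht : ∀ q : ℚ, (q : K) < t) {x : K}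
    (hx : x ∈ Subfield.closure {t}) (hx0 : x ≠ 0) : ∃ k : ℤ, mk x = mk (t ^ k) := by
  obtain ⟨p, q, rfl⟩ := Subfield.exists_aeval_div_aeval_of_mem_closure_singleton hx
  have hp : p ≠ 0 := by rintro rfl; simp at hx0
  have hq : q ≠ 0 := by rintro rfl; simp at hx0
  have ht0 : t ≠ 0 := by rintro rfl; simpa using ht 0
  refine ⟨p.natDegree - q.natDegree, ?_⟩
  rw [mk_div, mk_aeval_eq_mk_zpow_natDegree ht hp, mk_aeval_eq_mk_zpow_natDegree ht hq, ← mk_div,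
    zpow_sub₀ ht0]

end ArchimedeanClass

theorem roots_not_separated_general
    {K : Type*} [Field K] [LinearOrder K] [IsStrictOrderedRing K] (t : K) (ht : ∀ q : ℚ, (q : K) < t)
    (s c : K) (hs : 0 < s) (hs2 : s ^ 2 = t) (hc : 0 < c) (hc3 : c ^ 3 = t)
    (α β : K) (hα : α ∈ Subfield.closure {t})
    (h₁ : α < s) (h₂ : s < β) :
    α < c ∧ c < β := by
  have ht0 : 0 < t := by exact_mod_cast ht 0
  have hc6 : c ^ 6 = t ^ (2 : ℤ) := by rw [← hc3]; norm_cast; ring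
  have hs6 : s ^ 6 = t ^ (3 : ℤ) := by rw [← hs2]; norm_cast; ring
  have hcs : c < s := by
    refine lt_of_pow_lt_pow_left₀ 6 hs.le ?_
    rw [hc6, hs6]
    exact zpow_lt_zpow_right₀ (by exact_mod_cast ht 1) (by norm_num)
  refine ⟨?_, hcs.trans h₂⟩
  by_contra! hcα
  have hα0 : 0 < α := hc.trans_le hcα
  obtain ⟨k, hk⟩ := exists_mk_eq_mk_zpow_of_mem_closure ht hα hα0.ne'
  have hα6 : mk (α ^ 6) = mk (t ^ (6 * k)) := by
    rw [mk_pow, hk, ← mk_pow, mul_comm, zpow_mul]; norm_cast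
  have hlow : mk (α ^ 6) ≤ mk (t ^ (2 : ℤ)) :=
    mk_antitoneOn (Set.mem_Ici.mpr (by positivity)) (Set.mem_Ici.mpr (by positivity))
      (hc6 ▸ pow_le_pow_left₀ hc.le hcα 6)
  have hup : mk (t ^ (3 : ℤ)) ≤ mk (α ^ 6) :=
    mk_antitoneOn (Set.mem_Ici.mpr (by positivity)) (Set.mem_Ici.mpr (by positivity))
      (hs6 ▸ pow_le_pow_left₀ hα0.le h₁.le 6)
  rw [hα6, (strictAnti_mk_zpow ht).le_iff_ge] at hlow hup
  omega

/-- Remark: in the non-Archimedean field `K` with `t` larger than every rational, the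
roots `√t` and `∛t` of `(x² - t)(x³ - t)` cannot be separated by an interval with
endpoints in the subfield `ℚ(t)` generated by `t`: any interval with endpoints in
`Subfield.closure {t}` containing `√t` also contains `∛t`. -/
theorem roots_not_separated
    {K : Type*} [Field K] [LinearOrder K] [IsStrictOrderedRing K] (t : K) (ht : ∀ q : ℚ, (q : K) < t)
    (s c : K) (hs : 0 < s) (hs2 : s ^ 2 = t) (hc : 0 < c) (hc3 : c ^ 3 = t)
    (α β : K) (hα : α ∈ Subfield.closure {t}) (hβ : β ∈ Subfield.closure {t})
    (h₁ : α < s) (h₂ : s < β) :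
    α < c ∧ c < β :=
  roots_not_separated_general t ht s c hs hs2 hc hc3 α β hα h₁ h₂
end
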